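/- arXiv:2108.10703 — 4 statements merged into one kernel-verified Lean document; each statement's English description precedes it below -/
import Mathlib

section
/- Let M be a real m×n matrix of rank k ≥ 1, and let Ω be an n×k random matrix whose entries are independent Gaussian random variables with mean 0 and variance 1. Then, almost surely (with respect to the product Gaussian measure on the entries of Ω), the matrix MΩ has rank k; equivalently, the set of matrices Ω for which the columns of MΩ are linearly dependent has measure zero. -/
/-!
The rank of `M * Ω` is `k` exactly when the Gram determinant `det ((M Ω)ᵀ (M Ω))` is
nonzero, and this determinant is a polynomial in the entries of `Ω`. It is not the zero
polynomial, because `rank M = k` yields one `Ω₀` with `rank (M Ω₀) = k`. The zero set of a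
nonzero polynomial is null for every product of atomless measures: by Fubini, almost every slice
along the first variable is the root set of a nonzero univariate polynomial (its leading
coefficient, a polynomial in the remaining variables, is almost everywhere nonzero by
induction), hence finite.
-/

open MeasureTheory Matrix

theorem Polynomial.measure_prod_setOf_isRoot_eq_zero {R X : Type*} [CommRing R] [IsDomain R]
    [MeasurableSpace R] [MeasurableSpace X] (ν : Measure R) [SFinite ν] [NullSingletonClass ν]
    (π : Measure X) [SFinite π] {f : X → Polynomial R} (hf : ∀ᵐ x ∂π, f x ≠ 0)
    (hmeas : MeasurableSet {z : R × X | (f z.2).IsRoot z.1}) :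
    ν.prod π {z | (f z.2).IsRoot z.1} = 0 := by
  rw [Measure.prod_apply_symm hmeas]
  exact (lintegral_congr_ae (hf.mono fun x hx =>
    (finite_setOfPred_isRoot hx).measure_zero ν)).trans lintegral_zero

namespace MvPolynomial

theorem measurableSet_setOf_eval_eq_zero {ι : Type*} [Fintype ι] (p : MvPolynomial ι ℝ) :
    MeasurableSet {x : ι → ℝ | eval x p = 0} :=
  (continuous_eval p).measurable (measurableSet_singleton 0)

theorem measure_pi_fin_setOf_eval_eq_zero : ∀ {N : ℕ} (μ : Fin N → Measure ℝ)
    [∀ i, SigmaFinite (μ i)] [∀ i, NullSingletonClass (μ i)] {p : MvPolynomial (Fin N) ℝ},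
    p ≠ 0 → Measure.pi μ {x | eval x p = 0} = 0
  | 0, μ, _, _, p, hp => by
    obtain ⟨r, rfl⟩ := C_surjective (Fin 0) p
    have hr : r ≠ 0 := by simpa using hp
    simp [hr]
  | N + 1, μ, _, _, p, hp => by
    set q := finSuccEquiv ℝ N p
    have hq : q ≠ 0 := (EmbeddingLike.map_ne_zero_iff).mpr hp
    have hlead : ∀ᵐ s ∂Measure.pi (fun i => μ i.succ), eval s q.leadingCoeff ≠ 0 := by
      have := measure_pi_fin_setOf_eval_eq_zero (fun i => μ i.succ)
        (Polynomial.leadingCoeff_ne_zero.mpr hq)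
      exact ae_iff.mpr (by simpa using this)
    have hfiber : ∀ᵐ s ∂Measure.pi (fun i => μ i.succ), q.map (eval s) ≠ 0 :=
      hlead.mono fun s hs h => hs (by simpa using congrArg (fun r => r.coeff q.natDegree) h)
    have hpre : (MeasurableEquiv.piFinSuccAbove (fun _ => ℝ) 0).symm ⁻¹' {x | eval x p = 0} =
        {z : ℝ × (Fin N → ℝ) | (q.map (eval z.2)).IsRoot z.1} := by
      ext ⟨a, s⟩
      have hcons :
          (MeasurableEquiv.piFinSuccAbove (fun _ => ℝ) 0).symm (a, s) = Fin.cons a s := by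
        ext i; simp [MeasurableEquiv.piFinSuccAbove_symm_apply]
      simp only [Set.mem_preimage, Set.mem_ofPred_eq, Polynomial.IsRoot.def, hcons,
        eval_eq_eval_mv_eval', q]
    rw [← (measurePreserving_piFinSuccAbove μ 0).symm.measure_preimage_equiv, hpre]
    exact Polynomial.measure_prod_setOf_isRoot_eq_zero _ _ hfiber
      (hpre ▸ (MeasurableEquiv.piFinSuccAbove _ 0).symm.measurable
        (measurableSet_setOf_eval_eq_zero p))

theorem measure_pi_setOf_eval_eq_zero {ι : Type*} [Fintype ι] (μ : ι → Measure ℝ)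
    [∀ i, SigmaFinite (μ i)] [∀ i, NullSingletonClass (μ i)] {p : MvPolynomial ι ℝ}
    (hp : p ≠ 0) : Measure.pi μ {x | eval x p = 0} = 0 := by
  let σ := (Fintype.equivFin ι).symm
  have hpre : MeasurableEquiv.piCongrLeft (fun _ => ℝ) σ ⁻¹' {x | eval x p = 0} =
      {y | eval y (rename σ.symm p) = 0} := by
    ext y
    have : Equiv.piCongrLeft (fun _ => ℝ) σ y = y ∘ σ.symm := by
      funext i; simp [Equiv.piCongrLeft_apply, eq_rec_constant]
    simp [eval_rename, MeasurableEquiv.coe_piCongrLeft, this]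
  rw [← (measurePreserving_piCongrLeft μ σ).measure_preimage_equiv, hpre]
  exact measure_pi_fin_setOf_eval_eq_zero _
    ((rename_injective _ σ.symm.injective).ne_iff' (map_zero _) |>.mpr hp)

theorem measure_pi_pi_setOf_eval_eq_zero {ι κ : Type*} [Fintype ι] [Fintype κ]
    (μ : ι → κ → Measure ℝ) [∀ i j, IsProbabilityMeasure (μ i j)]
    [∀ i j, NullSingletonClass (μ i j)] {p : MvPolynomial (ι × κ) ℝ} (hp : p ≠ 0) :
    Measure.pi (fun i => Measure.pi (μ i)) {Ω | eval (fun q => Ω q.1 q.2) p = 0} = 0 := by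
  have hmap := Measure.infinitePi_map_curry_symm μ
  simp only [Measure.infinitePi_eq_pi] at hmap
  change Measure.pi (fun i => Measure.pi (μ i))
    ((MeasurableEquiv.curry ι κ ℝ).symm ⁻¹' {x | eval x p = 0}) = 0
  rw [← Measure.map_apply (MeasurableEquiv.measurable _) (measurableSet_setOf_eval_eq_zero p),
    hmap]
  exact measure_pi_setOf_eval_eq_zero _ hp

end MvPolynomial

namespace Matrix

variable {K : Type*} [Field K] {m n k : Type*} [Fintype n] [Fintype k]

theorem rank_eq_card_iff_det_ne_zero [DecidableEq k] (B : Matrix k k K) :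
    B.rank = Fintype.card k ↔ B.det ≠ 0 := by
  refine ⟨fun h => ?_, rank_of_det_ne_zero⟩
  have hsurj : Function.Surjective B.mulVecLin := by
    rw [← LinearMap.range_eq_top]
    exact Submodule.eq_top_of_finrank_eq (by rwa [Module.finrank_fintype_fun_eq_card])
  exact ((isUnit_iff_isUnit_det B).mp (mulVec_surjective_iff_isUnit.mp hsurj)).ne_zero

theorem rank_eq_card_iff_det_transpose_mul_self_ne_zero [Fintype m] [LinearOrder K]
    [IsStrictOrderedRing K] [DecidableEq k] (A : Matrix m k K) :
    A.rank = Fintype.card k ↔ (Aᵀ * A).det ≠ 0 := by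
  rw [← rank_transpose_mul_self, rank_eq_card_iff_det_ne_zero]

theorem exists_rank_mul_eq_rank (M : Matrix m n K) (hk : Fintype.card k = M.rank) :
    ∃ B : Matrix n k K, (M * B).rank = M.rank := by
  classical
  let f := M.mulVecLin
  obtain ⟨g, hg⟩ := f.rangeRestrict.exists_rightInverse_of_surjective f.range_rangeRestrict
  let e : (k → K) ≃ₗ[K] LinearMap.range f :=
    LinearEquiv.ofFinrankEq _ _ (by rw [Module.finrank_fintype_fun_eq_card, hk]; rfl)
  refine ⟨LinearMap.toMatrix' (g ∘ₗ e.toLinearMap), ?_⟩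
  have hcomp : (M * LinearMap.toMatrix' (g ∘ₗ e.toLinearMap)).mulVecLin =
      (LinearMap.range f).subtype ∘ₗ e.toLinearMap := by
    have hB : (LinearMap.toMatrix' (g ∘ₗ e.toLinearMap)).mulVecLin = g ∘ₗ e.toLinearMap :=
      toLin'_toMatrix' _
    rw [mulVecLin_mul, hB]
    exact LinearMap.ext fun x => congrArg Subtype.val (LinearMap.congr_fun hg (e x))
  rw [rank, hcomp, LinearMap.finrank_range_of_inj (Subtype.val_injective.comp e.injective),
    Module.finrank_fintype_fun_eq_card, hk]

variable {R : Type*} [CommRing R]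

noncomputable def gramDetPoly [Fintype m] (M : Matrix m n R) (k : Type*) [Fintype k]
    [DecidableEq k] : MvPolynomial (n × k) R :=
  let A : Matrix m k (MvPolynomial (n × k) R) :=
    (M.map MvPolynomial.C : Matrix m n (MvPolynomial (n × k) R)) * mvPolynomialX n k R
  (Aᵀ * A).det

theorem eval_gramDetPoly [Fintype m] [DecidableEq k] (M : Matrix m n R) (Ω : Matrix n k R) :
    MvPolynomial.eval (fun p => Ω p.1 p.2) (M.gramDetPoly k) = ((M * Ω)ᵀ * (M * Ω)).det := by
  have hX : (mvPolynomialX n k R).map (MvPolynomial.eval fun p => Ω p.1 p.2) = Ω :=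
    mvPolynomialX_map_eval₂ _ Ω
  have hM : (M.map MvPolynomial.C).map (MvPolynomial.eval fun p : n × k => Ω p.1 p.2) = M := by
    ext; simp
  rw [gramDetPoly, RingHom.map_det, RingHom.mapMatrix_apply, Matrix.map_mul, transpose_map,
    Matrix.map_mul, hX, hM]

end Matrix

theorem gaussian_sample_full_rank_ae_general
    (m n k : ℕ)
    (M : Matrix (Fin m) (Fin n) ℝ) (hM : M.rank = k)
    -- `μ` is the law of an `n × k` matrix with independent `N(0, 1)` entries
    (μ : Measure (Fin n → Fin k → ℝ))
    (hμ : μ = Measure.pi fun _ => Measure.pi fun _ =>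
      ProbabilityTheory.gaussianReal 0 1) :
    μ {Ω | (M * Matrix.of Ω).rank ≠ k} = 0 := by
  subst hμ
  have : NullSingletonClass (ProbabilityTheory.gaussianReal 0 1) :=
    ProbabilityTheory.nullSingletonClass_gaussianReal one_ne_zero
  have hrank (Ω : Matrix (Fin n) (Fin k) ℝ) :
      (M * Ω).rank = k ↔
        MvPolynomial.eval (fun p => Ω p.1 p.2) (M.gramDetPoly (Fin k)) ≠ 0 := by
    rw [eval_gramDetPoly, ← rank_eq_card_iff_det_transpose_mul_self_ne_zero, Fintype.card_fin]
  obtain ⟨Ω₀, hΩ₀⟩ :=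
    M.exists_rank_mul_eq_rank (k := Fin k) (by rw [Fintype.card_fin, hM])
  have hp : M.gramDetPoly (Fin k) ≠ 0 := fun h => by
    simpa [h] using (hrank Ω₀).1 (hΩ₀.trans hM)
  refine measure_mono_null (fun Ω hΩ => ?_)
    (MvPolynomial.measure_pi_pi_setOf_eval_eq_zero _ hp)
  exact not_not.mp (mt (hrank (of Ω)).mpr hΩ)

/-- If `M` is a real `m × n` matrix of rank `k ≥ 1` and `Ω` is an `n × k` matrix with
independent standard Gaussian entries, then almost surely `M * Ω` has rank `k`: the set of
`Ω` for which the columns of `M * Ω` are linearly dependent has measure zero. -/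
theorem gaussian_sample_full_rank_ae
    (m n k : ℕ) (hk : 1 ≤ k)
    (M : Matrix (Fin m) (Fin n) ℝ) (hM : M.rank = k)
    -- `μ` is the law of an `n × k` matrix with independent `N(0, 1)` entries
    (μ : Measure (Fin n → Fin k → ℝ))
    (hμ : μ = Measure.pi fun _ => Measure.pi fun _ =>
      ProbabilityTheory.gaussianReal 0 1) :
    μ {Ω | (M * Matrix.of Ω).rank ≠ k} = 0 :=
  gaussian_sample_full_rank_ae_general m n k M hM μ hμ
end

section
/- Let M be a real n×n matrix with singular values σ₁ ≥ σ₂ ≥ ⋯ ≥ σ_n, and let 1 ≤ k ≤ n. Then for every real n×n matrix B with rank B ≤ k, ‖M − B‖_F² ≥ Σ_{j>k} σ_j²; moreover this lower bound is attained, i.e., there exists a matrix B of rank at most k with ‖M − B‖_F² = Σ_{j>k} σ_j² (the rank-k truncated singular value decomposition of M). Hence the optimal rank-k Frobenius approximation error of M equals (Σ_{j>k} σ_j²)^{1/2}. -/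
/-!
Let `λ_j`, `v_j` be the eigenpairs of `MᵀM`, so that `‖M x‖² = ∑ⱼ λ_j ⟪v_j, x⟫²`.
If `rank B ≤ k`, the kernel of `B` contains an orthonormal family `w_1, …, w_{n-k}`. Bessel's
inequality applied to the rows of `M - B` gives
`‖M - B‖_F² ≥ ∑ᵢ ‖(M - B) wᵢ‖² = ∑ᵢ ‖M wᵢ‖² = ∑ⱼ λ_j t_j` with `t_j = ∑ᵢ ⟪v_j, wᵢ⟫²`.
The weights satisfy `0 ≤ t_j ≤ 1` and `∑ⱼ t_j = n - k`, and such a weighted sum is at least the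
sum of the `n - k` smallest eigenvalues. Equality holds for `B = M P`, where `P` is the orthogonal
projection onto the span of the top `k` eigenvectors.
-/

open Matrix

noncomputable def frobNorm {a b : Type*} [Fintype a] [Fintype b] (A : Matrix a b ℝ) : ℝ :=
  Real.sqrt (∑ i, ∑ j, A i j ^ 2)

open Finset WithLp Module
open scoped RealInnerProductSpace

section Weights

variable {ι : Type*} [Fintype ι] {S : Finset ι} {s t : ι → ℝ}

theorem sum_le_sum_mul_of_le_of_ge {c : ℝ} (hS : ∀ i ∈ S, s i ≤ c) (hSc : ∀ i ∉ S, c ≤ s i)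
    (ht0 : ∀ i, 0 ≤ t i) (ht1 : ∀ i, t i ≤ 1) (hts : ∑ i, t i = #S) :
    ∑ i ∈ S, s i ≤ ∑ i, s i * t i := by
  classical
  have hterm (i : ι) : 0 ≤ (s i - c) * (t i - if i ∈ S then 1 else 0) := by
    split_ifs with hi
    · exact mul_nonneg_of_nonpos_of_nonpos (sub_nonpos.2 (hS i hi)) (sub_nonpos.2 (ht1 i))
    · simpa using mul_nonneg (sub_nonneg.2 (hSc i hi)) (ht0 i)
  have hsum : ∑ i, (s i - c) * (t i - if i ∈ S then 1 else 0)
      = ∑ i, s i * t i - ∑ i ∈ S, s i := by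
    simp only [mul_sub, sub_mul, mul_ite, mul_one, mul_zero, sum_sub_distrib, sum_ite_mem,
      univ_inter, ← mul_sum, hts, sum_const, nsmul_eq_mul]
    ring
  linarith [sum_nonneg fun i (_ : i ∈ univ) => hterm i]

theorem sum_le_sum_mul_of_forall_le (hs : ∀ i ∈ S, ∀ j ∉ S, s i ≤ s j) (ht0 : ∀ i, 0 ≤ t i)
    (ht1 : ∀ i, t i ≤ 1) (hts : ∑ i, t i = #S) : ∑ i ∈ S, s i ≤ ∑ i, s i * t i := by
  rcases S.eq_empty_or_nonempty with rfl | hne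
  · have ht : ∀ i, t i = 0 := by simpa [sum_eq_zero_iff_of_nonneg fun i _ => ht0 i] using hts
    simp [ht]
  · exact sum_le_sum_mul_of_le_of_ge (fun i hi => le_sup' s hi)
      (fun j hj => sup'_le hne s fun i hi => hs i hi j hj) ht0 ht1 hts

end Weights

theorem Fin.card_filter_le_val (n k : ℕ) : #{j : Fin n | k ≤ (j : ℕ)} = n - k := by
  have h := card_filter_add_card_filter_not (s := univ) fun j : Fin n => (j : ℕ) < k
  simp only [Fin.card_filter_val_lt, not_lt, card_univ, Fintype.card_fin] at h
  omega

theorem Submodule.exists_orthonormal_of_le_finrank {𝕜 E : Type*} [RCLike 𝕜]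
    [NormedAddCommGroup E] [InnerProductSpace 𝕜 E] (K : Submodule 𝕜 E) [FiniteDimensional 𝕜 K]
    {d : ℕ} (hd : d ≤ finrank 𝕜 K) : ∃ w : Fin d → E, Orthonormal 𝕜 w ∧ ∀ i, w i ∈ K :=
  ⟨fun i => stdOrthonormalBasis 𝕜 K (Fin.castLE hd i),
    ((stdOrthonormalBasis 𝕜 K).orthonormal.comp _ (Fin.castLE_injective hd)).comp_linearIsometry
      K.subtypeₗᵢ,
    fun i => (stdOrthonormalBasis 𝕜 K (Fin.castLE hd i)).2⟩

variable {m n ι : Type*} [Fintype n] [Fintype ι]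

theorem frobNorm_sq [Fintype m] (C : Matrix m n ℝ) : frobNorm C ^ 2 = ∑ i, ∑ j, C i j ^ 2 :=
  Real.sq_sqrt (by positivity)

noncomputable def OrthonormalBasis.projMatrix (b : OrthonormalBasis ι ℝ (EuclideanSpace ℝ n))
    (H : Finset ι) : Matrix n n ℝ :=
  (of fun r (j : H) => b j r) * (of fun r (j : H) => b j r)ᵀ

theorem OrthonormalBasis.rank_projMatrix_le (b : OrthonormalBasis ι ℝ (EuclideanSpace ℝ n))
    (H : Finset ι) : (b.projMatrix H).rank ≤ #H :=
  (rank_mul_le_left _ _).trans ((rank_le_card_width _).trans (Fintype.card_coe H).le)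

variable [DecidableEq n]

theorem toEuclideanLin_apply_eq_inner (C : Matrix m n ℝ) (x : EuclideanSpace ℝ n) (r : m) :
    toEuclideanLin C x r = ⟪toLp 2 (C r), x⟫ := by
  simp [toLpLin_apply, mulVec, dotProduct, PiLp.inner_apply, mul_comm]

variable [Fintype m]

theorem sum_norm_sq_toEuclideanLin_eq_sum_rows (C : Matrix m n ℝ) (w : ι → EuclideanSpace ℝ n) :
    ∑ i, ‖toEuclideanLin C (w i)‖ ^ 2 = ∑ r, ∑ i, ‖⟪w i, toLp 2 (C r)⟫‖ ^ 2 := by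
  simp_rw [EuclideanSpace.real_norm_sq_eq, toEuclideanLin_apply_eq_inner, real_inner_comm,
    Real.norm_eq_abs, sq_abs]
  exact sum_comm

theorem Orthonormal.sum_norm_sq_toEuclideanLin_le_frobNorm_sq {w : ι → EuclideanSpace ℝ n}
    (hw : Orthonormal ℝ w) (C : Matrix m n ℝ) :
    ∑ i, ‖toEuclideanLin C (w i)‖ ^ 2 ≤ frobNorm C ^ 2 := by
  rw [sum_norm_sq_toEuclideanLin_eq_sum_rows, frobNorm_sq]
  gcongr with r
  simpa [EuclideanSpace.real_norm_sq_eq] using hw.sum_inner_products_le (toLp 2 (C r)) (s := univ)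

theorem OrthonormalBasis.sum_norm_sq_toEuclideanLin_eq_frobNorm_sq
    (b : OrthonormalBasis ι ℝ (EuclideanSpace ℝ n)) (C : Matrix m n ℝ) :
    ∑ i, ‖toEuclideanLin C (b i)‖ ^ 2 = frobNorm C ^ 2 := by
  simp_rw [sum_norm_sq_toEuclideanLin_eq_sum_rows, b.sum_sq_norm_inner_right, frobNorm_sq,
    EuclideanSpace.real_norm_sq_eq]

theorem rank_add_finrank_ker_toEuclideanLin (B : Matrix m n ℝ) :
    B.rank + finrank ℝ (LinearMap.ker (toEuclideanLin B)) = Fintype.card n := by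
  rw [rank_eq_finrank_range_toLin B (EuclideanSpace.basisFun m ℝ).toBasis
    (EuclideanSpace.basisFun n ℝ).toBasis, ← toEuclideanLin_eq_toLin_orthonormal,
    LinearMap.finrank_range_add_finrank_ker, finrank_euclideanSpace]

theorem OrthonormalBasis.toEuclideanLin_projMatrix_apply [DecidableEq ι]
    (b : OrthonormalBasis ι ℝ (EuclideanSpace ℝ n)) (H : Finset ι) (i : ι) :
    toEuclideanLin (b.projMatrix H) (b i) = if i ∈ H then b i else 0 := by
  rw [projMatrix, toLpLin_apply, ← mulVec_mulVec]
  set V : Matrix n H ℝ := of fun r j => b j r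
  have hcoord (j : H) : (Vᵀ *ᵥ ofLp (b i)) j = if (j : ι) = i then 1 else 0 := by
    rw [← orthonormal_iff_ite.1 b.orthonormal j i]
    simp [V, mulVec, dotProduct, PiLp.inner_apply, mul_comm]
  split_ifs with hi
  · have : Vᵀ *ᵥ ofLp (b i) = Pi.single ⟨i, hi⟩ 1 := by
      ext j
      simp [hcoord, Pi.single_apply, Subtype.ext_iff]
    rw [this, mulVec_single_one]
    rfl
  · have : Vᵀ *ᵥ ofLp (b i) = 0 := by
      ext j
      rw [hcoord, if_neg (ne_of_mem_of_not_mem j.2 hi)]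
      rfl
    rw [this, mulVec_zero]
    rfl

theorem norm_sq_toEuclideanLin_eq_inner (M : Matrix m n ℝ) (x : EuclideanSpace ℝ n) :
    ‖toEuclideanLin M x‖ ^ 2 = ⟪x, toEuclideanLin (Mᴴ * M) x⟫ := by
  classical
  rw [← real_inner_self_eq_norm_sq, toLpLin_mul_same, LinearMap.comp_apply,
    toEuclideanLin_conjTranspose_eq_adjoint, LinearMap.adjoint_inner_right]

theorem Matrix.IsHermitian.toEuclideanLin_eigenvectorBasis {A : Matrix n n ℝ}
    (hA : A.IsHermitian) (j : n) :
    toEuclideanLin A (hA.eigenvectorBasis j) = hA.eigenvalues j • hA.eigenvectorBasis j := by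
  rw [toLpLin_apply, hA.mulVec_eigenvectorBasis]
  rfl

theorem Matrix.IsHermitian.inner_toEuclideanLin_self_eq_sum {A : Matrix n n ℝ} (hA : A.IsHermitian)
    (x : EuclideanSpace ℝ n) :
    ⟪x, toEuclideanLin A x⟫ = ∑ j, hA.eigenvalues j * ⟪hA.eigenvectorBasis j, x⟫ ^ 2 := by
  rw [← hA.eigenvectorBasis.sum_inner_mul_inner]
  refine sum_congr rfl fun j _ => ?_
  rw [← isSymmetric_toEuclideanLin_iff.2 hA, hA.toEuclideanLin_eigenvectorBasis,
    real_inner_smul_left, real_inner_comm]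
  ring

section Gram

variable (M : Matrix m n ℝ)

theorem norm_sq_toEuclideanLin_eq_sum_eigenvalues (x : EuclideanSpace ℝ n) :
    ‖toEuclideanLin M x‖ ^ 2 = ∑ j, (isHermitian_conjTranspose_mul_self M).eigenvalues j *
      ⟪(isHermitian_conjTranspose_mul_self M).eigenvectorBasis j, x⟫ ^ 2 := by
  rw [norm_sq_toEuclideanLin_eq_inner, IsHermitian.inner_toEuclideanLin_self_eq_sum]

theorem norm_sq_toEuclideanLin_eigenvectorBasis (j : n) :
    ‖toEuclideanLin M ((isHermitian_conjTranspose_mul_self M).eigenvectorBasis j)‖ ^ 2 =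
      (isHermitian_conjTranspose_mul_self M).eigenvalues j := by
  rw [norm_sq_toEuclideanLin_eq_inner, IsHermitian.toEuclideanLin_eigenvectorBasis,
    real_inner_smul_right, real_inner_self_eq_norm_sq, OrthonormalBasis.norm_eq_one, one_pow,
    mul_one]

theorem sum_eigenvalues_le_frobNorm_sub_sq {B : Matrix m n ℝ} {S : Finset n}
    (hS : ∀ i ∈ S, ∀ j ∉ S, (isHermitian_conjTranspose_mul_self M).eigenvalues i ≤
      (isHermitian_conjTranspose_mul_self M).eigenvalues j)
    (hcard : #S + B.rank ≤ Fintype.card n) :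
    ∑ i ∈ S, (isHermitian_conjTranspose_mul_self M).eigenvalues i ≤ frobNorm (M - B) ^ 2 := by
  set b := (isHermitian_conjTranspose_mul_self M).eigenvectorBasis
  obtain ⟨w, hw, hwB⟩ := (LinearMap.ker (toEuclideanLin B)).exists_orthonormal_of_le_finrank
    (d := #S) (by have := rank_add_finrank_ker_toEuclideanLin B; omega)
  set t : n → ℝ := fun j => ∑ i, ⟪w i, b j⟫ ^ 2
  have ht1 (j : n) : t j ≤ 1 := by
    simpa [b.norm_eq_one j] using hw.sum_inner_products_le (b j) (s := univ)
  have hts : ∑ j, t j = #S :=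
    calc ∑ j, t j = ∑ i, ∑ j, ‖⟪w i, b j⟫‖ ^ 2 := by
          simp_rw [t, Real.norm_eq_abs, sq_abs]
          exact sum_comm
      _ = #S := by
          simp only [b.sum_sq_norm_inner_left, hw.1, one_pow, sum_const, card_univ,
            Fintype.card_fin, nsmul_eq_mul, mul_one]
  calc ∑ i ∈ S, (isHermitian_conjTranspose_mul_self M).eigenvalues i
      ≤ ∑ j, (isHermitian_conjTranspose_mul_self M).eigenvalues j * t j :=
        sum_le_sum_mul_of_forall_le hS (fun j => by positivity) ht1 hts
    _ = ∑ i, ‖toEuclideanLin M (w i)‖ ^ 2 := by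
        simp_rw [norm_sq_toEuclideanLin_eq_sum_eigenvalues, t, mul_sum, real_inner_comm (w _)]
        exact sum_comm
    _ = ∑ i, ‖toEuclideanLin (M - B) (w i)‖ ^ 2 := by
        simp_rw [map_sub, LinearMap.sub_apply, LinearMap.mem_ker.1 (hwB _), sub_zero]
    _ ≤ frobNorm (M - B) ^ 2 := hw.sum_norm_sq_toEuclideanLin_le_frobNorm_sq _

theorem exists_rank_le_frobNorm_sub_sq_eq (S : Finset n) :
    ∃ B : Matrix m n ℝ, B.rank ≤ #Sᶜ ∧
      frobNorm (M - B) ^ 2 = ∑ i ∈ S, (isHermitian_conjTranspose_mul_self M).eigenvalues i := by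
  set b := (isHermitian_conjTranspose_mul_self M).eigenvectorBasis
  refine ⟨M * b.projMatrix Sᶜ, (rank_mul_le_right _ _).trans (b.rank_projMatrix_le _), ?_⟩
  have h (i : n) : ‖toEuclideanLin (M - M * b.projMatrix Sᶜ) (b i)‖ ^ 2 =
      if i ∈ S then (isHermitian_conjTranspose_mul_self M).eigenvalues i else 0 := by
    rw [map_sub, LinearMap.sub_apply, toLpLin_mul_same, LinearMap.comp_apply,
      b.toEuclideanLin_projMatrix_apply]
    by_cases hi : i ∈ S
    · rw [if_neg (notMem_compl.2 hi), if_pos hi, map_zero, sub_zero,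
        norm_sq_toEuclideanLin_eigenvectorBasis]
    · rw [if_pos (mem_compl.2 hi), if_neg hi, sub_self, norm_zero, sq, mul_zero]
  rw [← b.sum_norm_sq_toEuclideanLin_eq_frobNorm_sq]
  simp_rw [h, sum_ite_mem, univ_inter]

end Gram

theorem eckart_young_frobenius_general
    (n k : ℕ)
    (M : Matrix (Fin n) (Fin n) ℝ)
    -- `σ` lists the singular values of `M` (square roots of the eigenvalues of `MᵀM`)
    -- arranged in decreasing order
    (σ : Fin n → ℝ) (hσ : Antitone σ) (e : Fin n ≃ Fin n)
    (hσval : ∀ j, σ j =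
      Real.sqrt ((Matrix.isHermitian_conjTranspose_mul_self M).eigenvalues (e j))) :
    (∀ B : Matrix (Fin n) (Fin n) ℝ, B.rank ≤ k →
      (∑ j : Fin n, if k ≤ (j : ℕ) then σ j ^ 2 else 0) ≤ frobNorm (M - B) ^ 2) ∧
    (∃ B : Matrix (Fin n) (Fin n) ℝ, B.rank ≤ k ∧
      frobNorm (M - B) ^ 2 = ∑ j : Fin n, if k ≤ (j : ℕ) then σ j ^ 2 else 0) := by
  set ev := (isHermitian_conjTranspose_mul_self M).eigenvalues
  set tail : Finset (Fin n) := ({j : Fin n | k ≤ (j : ℕ)} : Finset _).map e.toEmbedding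
  have hev (j : Fin n) : ev (e j) = σ j ^ 2 := by
    rw [hσval, Real.sq_sqrt ((posSemidef_conjTranspose_mul_self M).eigenvalues_nonneg _)]
  have htail : ∑ i ∈ tail, ev i = ∑ j : Fin n, if k ≤ (j : ℕ) then σ j ^ 2 else 0 := by
    simp [tail, sum_map, sum_filter, hev]
  have hcard : #tail = n - k := by rw [card_map, Fin.card_filter_le_val]
  refine ⟨fun B hB => htail ▸ sum_eigenvalues_le_frobNorm_sub_sq M ?_ ?_, ?_⟩
  · intro i hi j hj
    simp only [tail, mem_map_equiv, mem_filter, mem_univ, true_and, not_le] at hi hj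
    calc ev i = σ (e.symm i) ^ 2 := by rw [← hev, e.apply_symm_apply]
      _ ≤ σ (e.symm j) ^ 2 :=
        pow_le_pow_left₀ (hσval _ ▸ Real.sqrt_nonneg _) (hσ (Fin.le_def.2 (by omega))) 2
      _ = ev j := by rw [← hev, e.apply_symm_apply]
  · have := B.rank_le_card_width
    simp only [Fintype.card_fin] at this ⊢
    omega
  · obtain ⟨B, hB, hBeq⟩ := exists_rank_le_frobNorm_sub_sq_eq M tail
    refine ⟨B, ?_, hBeq.trans htail⟩
    rw [card_compl, Fintype.card_fin, hcard] at hB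
    omega

/-- Eckart–Young: if `σ₁ ≥ ⋯ ≥ σ_n` are the singular values of the real `n × n` matrix `M`
and `1 ≤ k ≤ n`, then every `B` with `rank B ≤ k` satisfies
`‖M − B‖_F² ≥ ∑_{j>k} σ_j²`, and this bound is attained by some `B` of rank at most `k`
(the rank-`k` truncated SVD of `M`). -/
theorem eckart_young_frobenius
    (n k : ℕ) (hk1 : 1 ≤ k) (hkn : k ≤ n)
    (M : Matrix (Fin n) (Fin n) ℝ)
    -- `σ` lists the singular values of `M` (square roots of the eigenvalues of `MᵀM`)
    -- arranged in decreasing order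
    (σ : Fin n → ℝ) (hσ : Antitone σ) (e : Fin n ≃ Fin n)
    (hσval : ∀ j, σ j =
      Real.sqrt ((Matrix.isHermitian_conjTranspose_mul_self M).eigenvalues (e j))) :
    (∀ B : Matrix (Fin n) (Fin n) ℝ, B.rank ≤ k →
      (∑ j : Fin n, if k ≤ (j : ℕ) then σ j ^ 2 else 0) ≤ frobNorm (M - B) ^ 2) ∧
    (∃ B : Matrix (Fin n) (Fin n) ℝ, B.rank ≤ k ∧
      frobNorm (M - B) ^ 2 = ∑ j : Fin n, if k ≤ (j : ℕ) then σ j ^ 2 else 0) :=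
  eckart_young_frobenius_general n k M σ hσ e hσval
end

section
/- Let p > 0 and q > 0 be real numbers and let σ(x) = 1/(1 + e^{−x}) be the sigmoid function. Then the per-pair skip-gram loss f(x) = −(p·ln σ(x) + q·ln σ(−x)) is strictly convex on ℝ, its derivative is f′(x) = −p + (p+q)·σ(x), and f attains its unique global minimum at the unique critical point x* = ln(p/q). In particular, with p = p_{ij} and q = λ·φ(Ê,j), the optimality condition f′(x) = 0 yields rᵢᵀc_j = ln(p_{ij}/(λ·φ(Ê,j))). -/
/-!
The derivative of `log σ` is `σ(-x) = 1 - σ(x)`, so `f' = -p + (p + q) σ` is strictly increasing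
because `σ` is; hence `f` is strictly convex, and `σ(ln(p/q)) = p/(p + q)` makes `ln(p/q)` its
unique critical point. A critical point of a strictly convex function is its strict global minimum.
-/

open Real Set

lemma StrictConvexOn.lt_of_isMinOn {𝕜 E β : Type*} [Field 𝕜] [LinearOrder 𝕜]
    [IsStrictOrderedRing 𝕜] [AddCommMonoid β] [PartialOrder β] [IsOrderedAddMonoid β]
    [AddCommMonoid E] [SMul 𝕜 E] [Module 𝕜 β] [PosSMulMono 𝕜 β] {f : E → β} {s : Set E} {a x : E}
    (hf : StrictConvexOn 𝕜 s f) (hmin : IsMinOn f s a) (ha : a ∈ s) (hx : x ∈ s) (hxa : x ≠ a) :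
    f a < f x := by
  refine (hmin hx).lt_of_ne fun hfx => hxa (hf.eq_of_isMinOn ?_ hmin hx ha)
  exact isMinOn_iff.2 fun y hy => hfx ▸ hmin hy

lemma StrictConvexOn.lt_of_hasDerivAt_eq_zero {f : ℝ → ℝ} {a x : ℝ}
    (hf : StrictConvexOn ℝ univ f) (ha : HasDerivAt f 0 a) (hxa : x ≠ a) : f a < f x := by
  have hmin : IsMinOn f univ a :=
    hf.convexOn.isMinOn_of_rightDeriv_eq_zero (by simp)
      (ha.hasDerivWithinAt.derivWithin (uniqueDiffWithinAt_Ioi a))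
  exact hf.lt_of_isMinOn hmin (mem_univ a) (mem_univ x) hxa

namespace Real

lemma hasDerivAt_log_sigmoid (x : ℝ) : HasDerivAt (fun x => log (sigmoid x)) (sigmoid (-x)) x := by
  convert (hasDerivAt_sigmoid x).log (sigmoid_pos x).ne' using 1
  field_simp [(sigmoid_pos x).ne']
  rw [sigmoid_neg]

lemma sigmoid_log {t : ℝ} (ht : 0 < t) : sigmoid (log t) = t / (1 + t) := by
  rw [sigmoid_def, exp_neg, exp_log ht]
  field_simp
  ring

end Real

noncomputable def skipgramLoss (p q x : ℝ) : ℝ :=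
  -(p * log (sigmoid x) + q * log (sigmoid (-x)))

lemma hasDerivAt_skipgramLoss (p q x : ℝ) :
    HasDerivAt (skipgramLoss p q) (-p + (p + q) * sigmoid x) x := by
  have hneg : HasDerivAt (fun x => log (sigmoid (-x))) (-sigmoid x) x := by
    have := (hasDerivAt_log_sigmoid (-x)).comp x (hasDerivAt_neg' x)
    rwa [neg_neg, mul_neg_one] at this
  refine (((hasDerivAt_log_sigmoid x).const_mul p).add (hneg.const_mul q)).neg.congr_deriv ?_
  rw [sigmoid_neg]
  ring

lemma deriv_skipgramLoss (p q : ℝ) :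
    deriv (skipgramLoss p q) = fun x => -p + (p + q) * sigmoid x :=
  funext fun x => (hasDerivAt_skipgramLoss p q x).deriv

variable {p q : ℝ}

lemma strictMono_deriv_skipgramLoss (hpq : 0 < p + q) : StrictMono (deriv (skipgramLoss p q)) := by
  rw [deriv_skipgramLoss]
  intro a b hab
  dsimp only
  gcongr

lemma strictConvexOn_skipgramLoss (hpq : 0 < p + q) : StrictConvexOn ℝ univ (skipgramLoss p q) :=
  (strictMono_deriv_skipgramLoss hpq).strictConvexOn_univ_of_deriv
    (continuous_iff_continuousAt.2 fun x => (hasDerivAt_skipgramLoss p q x).continuousAt)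

lemma hasDerivAt_skipgramLoss_log_div (hp : 0 < p) (hq : 0 < q) :
    HasDerivAt (skipgramLoss p q) 0 (log (p / q)) := by
  refine (hasDerivAt_skipgramLoss p q _).congr_deriv ?_
  rw [sigmoid_log (div_pos hp hq)]
  field_simp
  ring

/-- For `p, q > 0` and the sigmoid `σ(x) = 1/(1 + e^{−x})`, the per-pair skip-gram loss
`f(x) = −(p ln σ(x) + q ln σ(−x))` is strictly convex on `ℝ`, has derivative
`f′(x) = −p + (p+q) σ(x)`, has `x* = ln(p/q)` as its unique critical point, and attains its
unique global minimum there. -/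
theorem skipgram_per_pair_loss_minimizer (p q : ℝ) (hp : 0 < p) (hq : 0 < q) :
    let sig : ℝ → ℝ := fun x => 1 / (1 + Real.exp (-x))
    let f : ℝ → ℝ := fun x => -(p * Real.log (sig x) + q * Real.log (sig (-x)))
    StrictConvexOn ℝ Set.univ f ∧
    (∀ x : ℝ, deriv f x = -p + (p + q) * sig x) ∧
    (∀ x : ℝ, deriv f x = 0 ↔ x = Real.log (p / q)) ∧
    (∀ x : ℝ, x ≠ Real.log (p / q) → f (Real.log (p / q)) < f x) := by
  simp only [one_div, ← sigmoid_def]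
  change StrictConvexOn ℝ univ (skipgramLoss p q) ∧ _
  have hpq : 0 < p + q := add_pos hp hq
  have hcrit := hasDerivAt_skipgramLoss_log_div hp hq
  refine ⟨strictConvexOn_skipgramLoss hpq, fun x => (hasDerivAt_skipgramLoss p q x).deriv,
    fun x => hcrit.deriv ▸ (strictMono_deriv_skipgramLoss hpq).injective.eq_iff, fun x hx => ?_⟩
  exact (strictConvexOn_skipgramLoss hpq).lt_of_hasDerivAt_eq_zero hcrit hx
end

section
/- Let A be a real m×n matrix, let P be a real m×m orthogonal projection matrix (P² = P and Pᵀ = P), and let q ≥ 0 be an integer. Then the spectral norms satisfy ‖P A‖₂ ≤ ‖P (A Aᵀ)^q A‖₂^{1/(2q+1)}. In particular, the approximation error of a projection applied after q power iterations controls the error of the original scheme: an error within a factor c′ of the optimum for the powered matrix yields an error within c′^{1/(2q+1)} for A itself. -/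
/-!
Write `S = A Aᵀ` and `B = P S^q A`. Then `‖P A‖ = ‖Aᵀ P‖`, `‖Aᵀ P v‖² = ⟪P v, S P v⟫` and
`B Bᵀ = P S^(2q+1) P`. Expanding `w = P v` in an orthonormal eigenbasis of `S ⪰ 0`, Jensen's
inequality for `x ↦ x^(2q+1)` gives `⟪w, S w⟫^(2q+1) ≤ ‖w‖^(4q) ⟪w, S^(2q+1) w⟫`, and the right
side is `‖w‖^(4q) ‖Bᵀ v‖² ≤ ‖v‖^(4q+2) ‖B‖²` since `‖P‖ ≤ 1`.
-/

open Matrix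

/-- The spectral norm of a real matrix: the operator norm of the induced linear map between
Euclidean spaces, equivalently the largest singular value. -/
noncomputable def specNorm {a b : ℕ} (A : Matrix (Fin a) (Fin b) ℝ) : ℝ :=
  ‖LinearMap.toContinuousLinearMap (Matrix.toEuclideanLin A)‖

open scoped RealInnerProductSpace InnerProduct

theorem Finset.sum_mul_pow_le_sum_pow_mul_sum_mul_pow {ι : Type*} (s : Finset ι) {a z : ι → ℝ}
    (ha : ∀ i ∈ s, 0 ≤ a i) (hz : ∀ i ∈ s, 0 ≤ z i) (k : ℕ) :
    (∑ i ∈ s, a i * z i) ^ (k + 1) ≤ (∑ i ∈ s, a i) ^ k * ∑ i ∈ s, a i * z i ^ (k + 1) := by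
  rcases (Finset.sum_nonneg ha).eq_or_lt with hW | hW
  · have ha0 : ∀ i ∈ s, a i = 0 := (Finset.sum_eq_zero_iff_of_nonneg ha).mp hW.symm
    have hsum (f : ι → ℝ) : ∑ i ∈ s, a i * f i = 0 :=
      Finset.sum_eq_zero fun i hi => by rw [ha0 i hi, zero_mul]
    simp [hsum]
  · have h := Real.pow_arith_mean_le_arith_mean_pow s (fun i => a i / ∑ j ∈ s, a j) z
      (fun i hi => div_nonneg (ha i hi) hW.le) (by rw [← Finset.sum_div, div_self hW.ne']) hz (k + 1)
    simp only [div_mul_eq_mul_div, ← Finset.sum_div, div_pow] at h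
    rw [div_le_div_iff₀ (by positivity) hW] at h
    exact le_of_mul_le_mul_right (h.trans_eq (by ring)) hW

namespace ContinuousLinearMap

theorem opNorm_pow_le_of_forall_pow_le {𝕜 E F : Type*} [NontriviallyNormedField 𝕜]
    [SeminormedAddCommGroup E] [NormedSpace 𝕜 E] [SeminormedAddCommGroup F] [NormedSpace 𝕜 F]
    (f : E →L[𝕜] F) {k : ℕ} (hk : k ≠ 0) {C : ℝ} (hC : 0 ≤ C)
    (h : ∀ x, ‖f x‖ ^ k ≤ C * ‖x‖ ^ k) : ‖f‖ ^ k ≤ C := by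
  have hroot : (C ^ (k⁻¹ : ℝ)) ^ k = C := Real.rpow_inv_natCast_pow hC hk
  have hf : ‖f‖ ≤ C ^ (k⁻¹ : ℝ) := f.opNorm_le_bound (by positivity) fun x =>
    (pow_le_pow_iff_left₀ (norm_nonneg _) (by positivity) hk).mp
      (by rw [mul_pow, hroot]; exact h x)
  calc ‖f‖ ^ k ≤ (C ^ (k⁻¹ : ℝ)) ^ k := pow_le_pow_left₀ (norm_nonneg _) hf k
    _ = C := hroot

variable {E F : Type*} [NormedAddCommGroup E] [InnerProductSpace ℝ E] [FiniteDimensional ℝ E]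
  [NormedAddCommGroup F] [InnerProductSpace ℝ F] [CompleteSpace F]

theorem IsPositive.inner_pow_le {T : E →L[ℝ] E} (hT : T.IsPositive) (x : E) (k : ℕ) :
    ⟪x, T x⟫ ^ (k + 1) ≤ ‖x‖ ^ (2 * k) * ⟪x, (T ^ (k + 1)) x⟫ := by
  have hTs := hT.isSymmetric
  set b := hTs.eigenvectorBasis rfl
  set μ := hTs.eigenvalues rfl
  have repr_pow (j : ℕ) (i) : b.repr ((T ^ j) x) i = μ i ^ j * b.repr x i := by
    induction j with
    | zero => simp
    | succ j ih =>
      rw [pow_succ', mul_apply_eq_comp, ← coe_coe, hTs.eigenvectorBasis_apply_self_apply, ih,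
        RCLike.ofReal_real_eq_id, id_eq]
      ring
  have inner_pow (j : ℕ) : ⟪x, (T ^ j) x⟫ = ∑ i, b.repr x i ^ 2 * μ i ^ j := by
    rw [← b.repr.inner_map_map, PiLp.inner_apply]
    simp only [repr_pow, RCLike.inner_apply, conj_trivial]
    exact Finset.sum_congr rfl fun i _ => by ring
  have norm_sq : ‖x‖ ^ 2 = ∑ i, b.repr x i ^ 2 := by
    rw [← b.repr.norm_map, EuclideanSpace.norm_sq_eq]
    simp
  have inner_one : ⟪x, T x⟫ = ∑ i, b.repr x i ^ 2 * μ i := by simpa using inner_pow 1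
  rw [inner_one, inner_pow, pow_mul, norm_sq]
  exact Finset.univ.sum_mul_pow_le_sum_pow_mul_sum_mul_pow
    (fun i _ => sq_nonneg (b.repr x i)) (fun i _ => hT.toLinearMap.nonneg_eigenvalues rfl i) k

theorem _root_.IsStarProjection.opNorm_comp_pow_le {p : E →L[ℝ] E} (hp : IsStarProjection p)
    (T : F →L[ℝ] E) (q : ℕ) :
    ‖p ∘L T‖ ^ (2 * q + 1) ≤ ‖p ∘L ((T ∘L T†) ^ q) ∘L T‖ := by
  set S := T ∘L T†
  set B := p ∘L (S ^ q) ∘L T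
  have hS : S.IsPositive := isPositive_self_comp_adjoint T
  have hp_adj : p† = p := hp.isSelfAdjoint
  have hBB : B ∘L B† = p ∘L (S ^ (2 * q + 1)) ∘L p := by
    rw [show 2 * q + 1 = q + 1 + q by ring, pow_add, pow_succ]
    simp only [B, adjoint_comp, (hS.isSelfAdjoint.pow q).adjoint_eq, hp_adj, mul_def, comp_assoc, S]
  have hquad (v : E) : ⟪p v, (S ^ (2 * q + 1)) (p v)⟫ = ‖(B†) v‖ ^ 2 := by
    rw [← real_inner_self_eq_norm_sq, adjoint_inner_right, ← comp_apply B, hBB, comp_apply,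
      comp_apply, ← adjoint_inner_right, hp_adj, real_inner_comm]
  have key (v : E) :
      ‖(T† ∘L p) v‖ ^ (2 * (2 * q + 1)) ≤ ‖B‖ ^ 2 * ‖v‖ ^ (2 * (2 * q + 1)) := by
    have hsq : ‖(T†) (p v)‖ ^ 2 = ⟪p v, S (p v)⟫ := by
      rw [← real_inner_self_eq_norm_sq, adjoint_inner_right, real_inner_comm]
      rfl
    have hpv : ‖p v‖ ≤ ‖v‖ :=
      (p.le_opNorm v).trans (mul_le_of_le_one_left (norm_nonneg v) hp.norm_le)
    have hBv : ‖(B†) v‖ ≤ ‖B‖ * ‖v‖ := by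
      simpa only [adjoint.norm_map] using (B†).le_opNorm v
    calc ‖(T†) (p v)‖ ^ (2 * (2 * q + 1)) = ⟪p v, S (p v)⟫ ^ (2 * q + 1) := by rw [pow_mul, hsq]
      _ ≤ ‖p v‖ ^ (2 * (2 * q)) * ⟪p v, (S ^ (2 * q + 1)) (p v)⟫ := hS.inner_pow_le _ _
      _ ≤ ‖v‖ ^ (2 * (2 * q)) * (‖B‖ * ‖v‖) ^ 2 := by rw [hquad]; gcongr
      _ = ‖B‖ ^ 2 * ‖v‖ ^ (2 * (2 * q + 1)) := by ring
  have hnorm_adj : ‖p ∘L T‖ = ‖T† ∘L p‖ := by rw [← adjoint.norm_map, adjoint_comp, hp_adj]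
  have h := opNorm_pow_le_of_forall_pow_le (T† ∘L p) (by omega) (sq_nonneg _) key
  rw [pow_mul'] at h
  rw [hnorm_adj]
  exact (pow_le_pow_iff_left₀ (by positivity) (norm_nonneg _) two_ne_zero).mp h

end ContinuousLinearMap

namespace Matrix

variable {𝕜 : Type*} [RCLike 𝕜] {l m n : Type*} [Fintype l] [Fintype m] [Fintype n]
  [DecidableEq m] [DecidableEq n]

theorem toContinuousLinearMap_toEuclideanLin_mul (A : Matrix l m 𝕜) (B : Matrix m n 𝕜) :
    (toEuclideanLin (A * B)).toContinuousLinearMap =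
      (toEuclideanLin A).toContinuousLinearMap ∘L (toEuclideanLin B).toContinuousLinearMap := by
  ext1 v
  simp

theorem toContinuousLinearMap_toEuclideanLin_pow (A : Matrix n n 𝕜) (k : ℕ) :
    (toEuclideanLin (A ^ k)).toContinuousLinearMap =
      (toEuclideanLin A).toContinuousLinearMap ^ k :=
  map_pow (toEuclideanCLM (n := n) (𝕜 := 𝕜)) A k

theorem toContinuousLinearMap_toEuclideanLin_transpose (A : Matrix m n ℝ) :
    (toEuclideanLin Aᵀ).toContinuousLinearMap = (toEuclideanLin A).toContinuousLinearMap† := by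
  rw [← conjTranspose_eq_transpose_of_trivial, toEuclideanLin_conjTranspose_eq_adjoint]
  rfl

theorem isStarProjection_toContinuousLinearMap_toEuclideanLin {P : Matrix n n ℝ}
    (hP2 : P * P = P) (hPt : Pᵀ = P) :
    IsStarProjection (toEuclideanLin P).toContinuousLinearMap where
  isIdempotentElem := by
    rw [IsIdempotentElem, ContinuousLinearMap.mul_def,
      ← toContinuousLinearMap_toEuclideanLin_mul, hP2]
  isSelfAdjoint := by
    rw [IsSelfAdjoint, ContinuousLinearMap.star_eq_adjoint,
      ← toContinuousLinearMap_toEuclideanLin_transpose, hPt]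

end Matrix

/-- Power-iteration bound: if `P` is an orthogonal projection (`P² = P`, `Pᵀ = P`) and
`q ≥ 0`, then `‖P A‖₂ ≤ ‖P (A Aᵀ)^q A‖₂^{1/(2q+1)}`. -/
theorem power_iteration_spectral_bound
    (m n : ℕ) (A : Matrix (Fin m) (Fin n) ℝ) (P : Matrix (Fin m) (Fin m) ℝ)
    (hP2 : P * P = P) (hPt : Pᵀ = P) (q : ℕ) :
    specNorm (P * A) ≤ specNorm (P * (A * Aᵀ) ^ q * A) ^ ((1 : ℝ) / (2 * (q : ℝ) + 1)) := by
  have h := (isStarProjection_toContinuousLinearMap_toEuclideanLin hP2 hPt).opNorm_comp_pow_le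
    (toEuclideanLin A).toContinuousLinearMap q
  simp only [← toContinuousLinearMap_toEuclideanLin_transpose,
    ← toContinuousLinearMap_toEuclideanLin_mul, ← toContinuousLinearMap_toEuclideanLin_pow] at h
  have hexp : 2 * (q : ℝ) + 1 = ((2 * q + 1 : ℕ) : ℝ) := by push_cast; ring
  unfold specNorm
  rw [one_div, Real.le_rpow_inv_iff_of_pos (norm_nonneg _) (norm_nonneg _) (by positivity), hexp,
    Real.rpow_natCast, Matrix.mul_assoc]
  exact h
end
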